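/- For every even integer k = 2m with m ≥ 2 and every n ≥ 2k − 1, the power (P_n)^{3m−3} of the path on n vertices is not k-ordered: there exists a sequence of k vertices v_1, …, v_k such that no cycle in (P_n)^{3m−3} contains them in this cyclic order. -/

import Mathlib

def SimpleGraph.power {V : Type*} (G : SimpleGraph V) (n : ℕ) : SimpleGraph V where
  Adj v w := 1 ≤ G.dist v w ∧ G.dist v w ≤ n
  symm := ⟨fun v w h => by simpa [SimpleGraph.dist_comm] using h⟩
  loopless := ⟨fun v h => by simp [SimpleGraph.dist_self] at h⟩

/-- A graph is Hamilton-connected if every pair of distinct vertices is joined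
by a Hamiltonian path. -/
def SimpleGraph.IsHamiltonConnected {V : Type*} [DecidableEq V] (G : SimpleGraph V) : Prop :=
  ∀ v w : V, v ≠ w → ∃ p : G.Walk v w, p.IsHamiltonian

/-- A graph is `k`-ordered if every sequence of `k` distinct vertices lies on a cycle
in the given cyclic order. -/
def SimpleGraph.IsKOrdered {V : Type*} (G : SimpleGraph V) (k : ℕ) : Prop :=
  ∀ v : Fin k → V, Function.Injective v →
    ∃ (a : V) (c : G.Walk a a), c.IsCycle ∧
      ∃ t : Fin k → ℕ, StrictMono t ∧ (∀ i, t i < c.length) ∧ ∀ i, c.getVert (t i) = v i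

/-- A graph is `k`-ordered Hamiltonian if every sequence of `k` distinct vertices lies on a
Hamiltonian cycle in the given cyclic order. -/
def SimpleGraph.IsKOrderedHamiltonian {V : Type*} [DecidableEq V] (G : SimpleGraph V) (k : ℕ) :
    Prop :=
  ∀ v : Fin k → V, Function.Injective v →
    ∃ (a : V) (c : G.Walk a a), c.IsHamiltonianCycle ∧
      ∃ t : Fin k → ℕ, StrictMono t ∧ (∀ i, t i < c.length) ∧ ∀ i, c.getVert (t i) = v i


open SimpleGraph

private lemma power_adj {V : Type*} (G : SimpleGraph V) (k : ℕ) (x y : V) :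
    (G.power k).Adj x y ↔ 1 ≤ G.dist x y ∧ G.dist x y ≤ k := Iff.rfl


open SimpleGraph

private lemma path_getVert_inj {V : Type*} {G : SimpleGraph V} {x y : V} {q : G.Walk x y}
    (hq : q.IsPath) : ∀ i j, i ≤ q.length → j ≤ q.length → q.getVert i = q.getVert j → i = j := by
  induction q with
  | nil => intro i j hi hj _; simp [Walk.length_nil] at hi hj; omega
  | cons h q ih =>
    rw [Walk.cons_isPath_iff] at hq
    intro i j hi hj hg
    match i, j with
    | 0, 0 => rfl
    | 0, j+1 =>
      exfalso
      rw [Walk.getVert_zero, Walk.getVert_cons_succ] at hg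
      exact hq.2 (Walk.mem_support_iff_exists_getVert.mpr
        ⟨j, hg.symm, by simp [Walk.length_cons] at hj; omega⟩)
    | i+1, 0 =>
      exfalso
      rw [Walk.getVert_zero, Walk.getVert_cons_succ] at hg
      exact hq.2 (Walk.mem_support_iff_exists_getVert.mpr
        ⟨i, hg, by simp [Walk.length_cons] at hi; omega⟩)
    | i+1, j+1 =>
      rw [Walk.getVert_cons_succ, Walk.getVert_cons_succ] at hg
      have := ih hq.1 i j (by simp [Walk.length_cons] at hi; omega)
        (by simp [Walk.length_cons] at hj; omega) hg
      omega

private lemma cycle_getVert_inj {V : Type*} {G : SimpleGraph V} {a : V} {c : G.Walk a a}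
    (hc : c.IsCycle) : ∀ i j, 1 ≤ i → i ≤ c.length → 1 ≤ j → j ≤ c.length →
    c.getVert i = c.getVert j → i = j := by
  cases c with
  | nil =>
    intro i j h1i hi _ _ _
    simp [Walk.length_nil] at hi
    omega
  | cons hadj q =>
    have hq : q.IsPath := ((Walk.cons_isCycle_iff q hadj).mp hc).1
    intro i j h1i hi h1j hj hg
    obtain ⟨i', rfl⟩ : ∃ i', i = i' + 1 := ⟨i - 1, by omega⟩
    obtain ⟨j', rfl⟩ : ∃ j', j = j' + 1 := ⟨j - 1, by omega⟩
    rw [Walk.getVert_cons_succ, Walk.getVert_cons_succ] at hg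
    have := path_getVert_inj hq i' j' (by simp [Walk.length_cons] at hi; omega)
      (by simp [Walk.length_cons] at hj; omega) hg
    omega

private lemma pathGraph_walk_exists {n : ℕ} :
    ∀ (d : ℕ) (u w : Fin n), u.val + d = w.val →
      ∃ p : (SimpleGraph.pathGraph n).Walk u w, p.length = d := by
  intro d
  induction d with
  | zero =>
    intro u w h
    have : u = w := Fin.ext (by omega)
    subst this
    exact ⟨.nil, rfl⟩
  | succ d ih =>
    intro u w h
    have hlt : u.val + 1 < n := by have := w.isLt; omega
    obtain ⟨p, hp⟩ := ih ⟨u.val + 1, hlt⟩ w (show u.val + 1 + d = w.val by omega)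
    have hadj : (SimpleGraph.pathGraph n).Adj u ⟨u.val + 1, hlt⟩ := by
      rw [SimpleGraph.pathGraph_adj]; exact Or.inl rfl
    exact ⟨Walk.cons hadj p, by simp [hp]⟩

private lemma pathGraph_walk_length {n : ℕ} {u w : Fin n}
    (p : (SimpleGraph.pathGraph n).Walk u w) :
    u.val ≤ w.val + p.length ∧ w.val ≤ u.val + p.length := by
  induction p with
  | nil => omega
  | cons hadj q ih =>
    rw [SimpleGraph.pathGraph_adj] at hadj
    simp only [Walk.length_cons]
    omega

private lemma pathGraph_dist_eq {n : ℕ} (u w : Fin n) :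
    (SimpleGraph.pathGraph n).dist u w = (u.val - w.val) + (w.val - u.val) := by
  apply le_antisymm
  · rcases le_total u.val w.val with h | h
    · obtain ⟨p, hp⟩ := pathGraph_walk_exists (w.val - u.val) u w (by omega)
      have := SimpleGraph.dist_le p
      omega
    · obtain ⟨p, hp⟩ := pathGraph_walk_exists (u.val - w.val) w u (by omega)
      have h2 : (SimpleGraph.pathGraph n).dist u w ≤ p.length := by
        rw [SimpleGraph.dist_comm]; exact SimpleGraph.dist_le p
      omega
  · have hr : (SimpleGraph.pathGraph n).Reachable u w := SimpleGraph.pathGraph_preconnected n u w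
    obtain ⟨p, hp⟩ := hr.exists_walk_length_eq_dist
    have := pathGraph_walk_length p
    omega

private lemma arcLR (m : ℕ) (hm : 2 ≤ m) (f : ℕ → ℕ) (s e : ℕ) (hse : s < e)
    (hstep : ∀ p, f (p+1) ≤ f p + (3*m-3) ∧ f p ≤ f (p+1) + (3*m-3))
    (hint : ∀ p, s < p → p < e → (m ≤ f p ∧ f p ≤ 3*m-2) ∨ 4*m-1 ≤ f p)
    (hs : f s + 1 ≤ m) (he : 3*m-1 ≤ f e) (hfar : f s + (3*m-3) < f e) :
    ∃ p, s < p ∧ p < e ∧ m ≤ f p ∧ f p ≤ 3*m-2 := by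
  classical
  have hQ : ∃ q, s < q ∧ q ≤ e ∧ 2*m-1 ≤ f q := ⟨e, hse, le_rfl, by omega⟩
  obtain ⟨q, hqs, hqe', hqf, hqmin⟩ :
      ∃ q, s < q ∧ q ≤ e ∧ 2*m-1 ≤ f q ∧ ∀ r, s < r → r < q → f r ≤ 2*m-2 := by
    refine ⟨Nat.find hQ, (Nat.find_spec hQ).1, (Nat.find_spec hQ).2.1, (Nat.find_spec hQ).2.2,
      fun r hr1 hr2 => ?_⟩
    by_contra hcon
    exact Nat.find_min hQ hr2 ⟨hr1, le_trans (le_of_lt hr2) (Nat.find_spec hQ).2.1, by omega⟩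
  by_cases hq1 : q = s + 1
  · subst hq1
    rcases eq_or_lt_of_le hqe' with he' | hlt
    · exfalso; subst he'; have := (hstep s).1; omega
    · rcases hint (s+1) hqs hlt with hM | hF
      · exact ⟨s+1, hqs, hlt, hM.1, hM.2⟩
      · exfalso; have := (hstep s).1; omega
  · have hq2 : s + 1 < q := by omega
    have hnp : f (q-1) ≤ 2*m-2 := hqmin (q-1) (by omega) (by omega)
    have hqe : q - 1 < e := by omega
    rcases hint (q-1) (by omega) hqe with hM | hF
    · exact ⟨q-1, by omega, hqe, hM.1, hM.2⟩
    · omega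

private lemma arcRL (m : ℕ) (hm : 2 ≤ m) (f : ℕ → ℕ) (s e : ℕ) (hse : s < e)
    (hstep : ∀ p, f (p+1) ≤ f p + (3*m-3) ∧ f p ≤ f (p+1) + (3*m-3))
    (hint : ∀ p, s < p → p < e → (m ≤ f p ∧ f p ≤ 3*m-2) ∨ 4*m-1 ≤ f p)
    (hs : 3*m-1 ≤ f s) (he : f e + 1 ≤ m) (hfar : f e + (3*m-3) < f s) :
    ∃ p, s < p ∧ p < e ∧ m ≤ f p ∧ f p ≤ 3*m-2 := by
  classical
  have hQ : ∃ q, s < q ∧ q ≤ e ∧ f q ≤ 2*m-2 := ⟨e, hse, le_rfl, by omega⟩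
  obtain ⟨q, hqs, hqe', hqf, hqmin⟩ :
      ∃ q, s < q ∧ q ≤ e ∧ f q ≤ 2*m-2 ∧ ∀ r, s < r → r < q → 2*m-1 ≤ f r := by
    refine ⟨Nat.find hQ, (Nat.find_spec hQ).1, (Nat.find_spec hQ).2.1, (Nat.find_spec hQ).2.2,
      fun r hr1 hr2 => ?_⟩
    by_contra hcon
    exact Nat.find_min hQ hr2 ⟨hr1, le_trans (le_of_lt hr2) (Nat.find_spec hQ).2.1, by omega⟩
  by_cases hq1 : q = s + 1
  · subst hq1
    rcases eq_or_lt_of_le hqe' with he' | hlt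
    · exfalso; subst he'; have := (hstep s).2; omega
    · rcases hint (s+1) hqs hlt with hM | hF
      · exact ⟨s+1, hqs, hlt, hM.1, hM.2⟩
      · omega
  · have hq2 : s + 1 < q := by omega
    have hnp : 2*m-1 ≤ f (q-1) := hqmin (q-1) (by omega) (by omega)
    have hqe : q - 1 < e := by omega
    rcases hint (q-1) (by omega) hqe with hM | hF
    · exact ⟨q-1, by omega, hqe, hM.1, hM.2⟩
    · have hstep' := (hstep (q-1)).2
      have hq' : q - 1 + 1 = q := by omega
      rw [hq'] at hstep'
      have hqlt : q < e := by
        rcases eq_or_lt_of_le hqe' with he' | h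
        · exfalso; subst he'; omega
        · exact h
      exact ⟨q, hqs, hqlt, by omega, by omega⟩

theorem stmt_4 (m : ℕ) (hm : 2 ≤ m) (n : ℕ) (hn : 2 * (2 * m) - 1 ≤ n) :
    ¬ ((SimpleGraph.pathGraph n).power (3 * m - 3)).IsKOrdered (2 * m) := by
  intro hko
  have hn4 : 4 * m - 1 ≤ n := by omega
  haveI : NeZero (2 * m) := ⟨by omega⟩
  -- the bad sequence
  set vv : ℕ → ℕ := fun i => if i % 2 = 0 then i / 2 else 3*m - 1 + i / 2 with hvvdef
  have hvv_lt : ∀ i, i < 2*m → vv i < n := by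
    intro i hi
    simp only [hvvdef]
    split <;> omega
  set v : Fin (2*m) → Fin n := fun i => ⟨vv i.val, hvv_lt i.val i.isLt⟩ with hvdef
  have hvval : ∀ i : Fin (2*m), (v i).val = vv i.val := fun i => rfl
  clear_value vv
  have hvinj : Function.Injective v := by
    intro i j hij
    have h1 : vv i.val = vv j.val := congrArg Fin.val hij
    have hi := i.isLt; have hj := j.isLt
    apply Fin.ext
    simp only [hvvdef] at h1
    split at h1 <;> split at h1 <;> omega
  clear_value v
  obtain ⟨a, c, hcyc, τ, hτmono, hτlt, hτval⟩ := hko v hvinj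
  set len := c.length with hlendef
  have hlen3 : 3 ≤ len := hcyc.three_le_length
  have hlen0 : 0 < len := by omega
  clear_value len
  have hgl : c.getVert len = c.getVert 0 := by
    rw [hlendef, Walk.getVert_length, Walk.getVert_zero]
  have hcinj : ∀ i j, 1 ≤ i → i ≤ len → 1 ≤ j → j ≤ len →
      c.getVert i = c.getVert j → i = j :=
    fun i j h1 h2 h3 h4 h5 => cycle_getVert_inj hcyc i j h1 (by omega) h3 (by omega) h5
  have hadjsucc : ∀ r, r < len →
      ((SimpleGraph.pathGraph n).power (3 * m - 3)).Adj (c.getVert r) (c.getVert (r+1)) :=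
    fun r hr => c.adj_getVert_succ (by omega)
  set F : ℕ → Fin n := fun p => c.getVert (p % len) with hFdef
  clear_value F
  -- injectivity mod len
  have hFcong : ∀ p q, F p = F q → p % len = q % len := by
    intro p q h
    have hp : p % len < len := Nat.mod_lt _ hlen0
    have hq : q % len < len := Nat.mod_lt _ hlen0
    simp only [hFdef] at h
    by_cases h0p : p % len = 0 <;> by_cases h0q : q % len = 0
    · omega
    · exfalso
      rw [h0p] at h
      have h2 : c.getVert len = c.getVert (q % len) := by rw [hgl]; exact h
      have := hcinj len (q % len) (by omega) le_rfl (by omega) (by omega) h2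
      omega
    · exfalso
      rw [h0q] at h
      have h2 : c.getVert (p % len) = c.getVert len := by rw [hgl]; exact h
      have := hcinj (p % len) len (by omega) (by omega) (by omega) le_rfl h2
      omega
    · exact hcinj _ _ (by omega) (by omega) (by omega) (by omega) h
  -- adjacency of consecutive F values
  have hadjF : ∀ p, ((SimpleGraph.pathGraph n).power (3 * m - 3)).Adj (F p) (F (p+1)) := by
    intro p
    have hplt : p % len < len := Nat.mod_lt _ hlen0
    have hadj := hadjsucc (p % len) hplt
    have hmod : (p + 1) % len = (p % len + 1) % len := by
      rw [Nat.add_mod p 1 len, Nat.mod_eq_of_lt (show 1 < len by omega)]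
    by_cases hcase : p % len + 1 = len
    · have h1 : (p + 1) % len = 0 := by rw [hmod, hcase, Nat.mod_self]
      have h2 : c.getVert (p % len + 1) = c.getVert 0 := by rw [hcase]; exact hgl
      simp only [hFdef, h1]
      rw [← h2]
      exact hadj
    · have h1 : (p + 1) % len = p % len + 1 := by
        rw [hmod, Nat.mod_eq_of_lt (by omega)]
      simp only [hFdef, h1]
      exact hadj
  -- step bound
  have hstep : ∀ p, (F (p+1)).val ≤ (F p).val + (3*m-3) ∧ (F p).val ≤ (F (p+1)).val + (3*m-3) := by
    intro p
    have h := (power_adj _ _ _ _).mp (hadjF p)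
    rw [pathGraph_dist_eq] at h
    omega
  -- position function u
  set u : ℕ → ℕ := fun i => if h : i < 2*m then (τ ⟨i, h⟩ : ℕ) else τ 0 + len with hudef
  clear_value u
  have hτ0le : ∀ j : Fin (2*m), τ 0 ≤ τ j := by
    intro j
    exact hτmono.monotone (by simp [Fin.le_def])
  have humono : ∀ i j, i < j → j ≤ 2*m → u i < u j := by
    intro i j hij hj
    by_cases hj' : j < 2*m
    · have hi' : i < 2*m := by omega
      simp only [hudef, dif_pos hj', dif_pos hi']
      exact hτmono (show (⟨i, hi'⟩ : Fin (2*m)) < ⟨j, hj'⟩ from hij)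
    · have hj2 : j = 2*m := by omega
      have hi' : i < 2*m := by omega
      simp only [hudef, dif_pos hi', dif_neg (show ¬ (j < 2*m) from hj')]
      have h1 : τ ⟨i, hi'⟩ < len := hτlt _
      omega
  have humono' : ∀ i j, i ≤ j → j ≤ 2*m → u i ≤ u j := by
    intro i j hij hj
    rcases eq_or_lt_of_le hij with rfl | h
    · exact le_rfl
    · exact le_of_lt (humono i j h hj)
  have hu0 : u 0 = τ 0 := by
    simp only [hudef, dif_pos (show 0 < 2*m by omega)]
    exact congrArg τ (Fin.val_injective (by simp [Fin.val_zero]))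
  have huval : ∀ (i : ℕ) (h : i < 2*m), u i = τ ⟨i, h⟩ := by
    intro i h
    simp only [hudef, dif_pos h]
  have hulast : u (2*m) = τ 0 + len := by
    simp only [hudef, dif_neg (lt_irrefl (2*m))]
  have huwin : ∀ i, i ≤ 2*m → τ 0 ≤ u i ∧ u i ≤ τ 0 + len := by
    intro i hi
    constructor
    · rcases Nat.eq_zero_or_pos i with rfl | hpos
      · rw [hu0]
      · exact le_trans (le_of_eq hu0.symm) (le_of_lt (humono 0 i hpos hi))
    · rcases eq_or_lt_of_le hi with rfl | hlt
      · exact le_of_eq hulast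
      · rw [huval i hlt]
        have := hτlt (⟨i, hlt⟩ : Fin (2*m))
        omega
  -- F at marked positions
  have hFu : ∀ (i : ℕ) (h : i < 2*m), F (u i) = v ⟨i, h⟩ := by
    intro i h
    simp only [hFdef]
    rw [huval i h, Nat.mod_eq_of_lt (hτlt _)]
    exact hτval _
  have hFu2 : F (u (2*m)) = v 0 := by
    simp only [hFdef]
    rw [hulast, Nat.add_mod_right, Nat.mod_eq_of_lt (hτlt 0)]
    exact hτval 0
  -- window uniqueness
  have hwinmod : ∀ p q, p ≤ q → q < p + len → p % len = q % len → p = q := by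
    intro p q hpq hlt hmod
    have hdvd : len ∣ q - p := (Nat.modEq_iff_dvd' hpq).mp hmod
    rcases Nat.eq_zero_or_pos (q - p) with h | h
    · omega
    · have := Nat.le_of_dvd h hdvd
      omega
  -- internal vertices are not prescribed
  have hnotin : ∀ i p, i < 2*m → u i < p → p < u (i+1) → ∀ j : Fin (2*m), F p ≠ v j := by
    intro i p hi hp1 hp2 j heq
    have hFj : F (τ j) = v j := by
      simp only [hFdef]
      rw [Nat.mod_eq_of_lt (hτlt j)]
      exact hτval j
    have hmod : p % len = τ j := by
      have h0 := hFcong p (τ j) (heq.trans hFj.symm)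
      rwa [Nat.mod_eq_of_lt (hτlt j)] at h0
    have hwl : τ 0 < p := lt_of_le_of_lt (huwin i (by omega)).1 hp1
    have hwr : p < τ 0 + len := lt_of_lt_of_le hp2 (huwin (i+1) (by omega)).2
    have hτ0j := hτ0le j
    have hτjlt := hτlt j
    have hmod' : p % len = τ j % len := by rw [Nat.mod_eq_of_lt hτjlt]; exact hmod
    have hpj : p = τ j := by
      rcases le_total p (τ j) with hle | hle
      · exact hwinmod p (τ j) hle (by omega) hmod'
      · exact (hwinmod (τ j) p hle (by omega) hmod'.symm).symm
    have hujv : u j.val = τ j := by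
      rw [huval j.val j.isLt]
    rcases Nat.lt_or_ge j.val (i+1) with hc | hc
    · have : u j.val ≤ u i := humono' j.val i (by omega) (by omega)
      omega
    · have : u (i+1) ≤ u j.val := humono' (i+1) j.val hc (by omega)
      omega
  -- internal classification
  have hint : ∀ i, i < 2*m → ∀ p, u i < p → p < u (i+1) →
      (m ≤ (F p).val ∧ (F p).val ≤ 3*m-2) ∨ 4*m-1 ≤ (F p).val := by
    intro i hi p hp1 hp2
    have hnr := hnotin i p hi hp1 hp2
    have hxn : (F p).val < n := (F p).isLt
    by_contra hcon
    push_neg at hcon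
    have hcase : (F p).val + 1 ≤ m ∨ (3*m-1 ≤ (F p).val ∧ (F p).val ≤ 4*m-2) := by omega
    rcases hcase with hc | hc
    · apply hnr ⟨2 * (F p).val, by omega⟩
      apply Fin.ext
      rw [hvval]
      show (F p).val = vv (2 * (F p).val)
      simp only [hvvdef]
      rw [if_pos (by omega)]
      omega
    · apply hnr ⟨2 * ((F p).val - (3*m-1)) + 1, by omega⟩
      apply Fin.ext
      rw [hvval]
      show (F p).val = vv (2 * ((F p).val - (3*m-1)) + 1)
      simp only [hvvdef]
      rw [if_neg (by omega)]
      omega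
  -- per-arc existence of an M-vertex
  have key : ∀ i : Fin (2*m), ∃ p, u i.val < p ∧ p < u (i.val+1) ∧
      m ≤ (F p).val ∧ (F p).val ≤ 3*m-2 := by
    intro i
    have hi := i.isLt
    have hse : u i.val < u (i.val+1) := humono i.val (i.val+1) (by omega) (by omega)
    have h1 : (F (u i.val)).val = vv i.val := by
      rw [hFu i.val hi]; exact hvval _
    rcases Nat.even_or_odd i.val with he | ho
    · -- even: L → R
      have hi1 : i.val + 1 < 2*m := by
        obtain ⟨w, hw⟩ := he
        omega
      have h2 : (F (u (i.val+1))).val = vv (i.val+1) := by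
        rw [hFu (i.val+1) hi1]; exact hvval _
      have hieven : i.val % 2 = 0 := by obtain ⟨w, hw⟩ := he; omega
      have hvv1 : vv i.val = i.val / 2 := by simp only [hvvdef]; rw [if_pos hieven]
      have hvv2 : vv (i.val+1) = 3*m - 1 + (i.val+1) / 2 := by
        simp only [hvvdef]; rw [if_neg (by omega)]
      refine arcLR m hm (fun p => (F p).val) (u i.val) (u (i.val+1)) hse hstep
        (hint i.val hi) ?_ ?_ ?_
      · show (F (u i.val)).val + 1 ≤ m
        omega
      · show 3*m-1 ≤ (F (u (i.val+1))).val
        omega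
      · show (F (u i.val)).val + (3*m-3) < (F (u (i.val+1))).val
        omega
    · -- odd: R → L
      have hiodd : i.val % 2 = 1 := by obtain ⟨w, hw⟩ := ho; omega
      have hvv1 : vv i.val = 3*m - 1 + i.val / 2 := by
        simp only [hvvdef]; rw [if_neg (by omega)]
      by_cases hi1 : i.val + 1 < 2*m
      · have h2 : (F (u (i.val+1))).val = vv (i.val+1) := by
          rw [hFu (i.val+1) hi1]; exact hvval _
        have hvv2 : vv (i.val+1) = (i.val+1) / 2 := by
          simp only [hvvdef]; rw [if_pos (by omega)]
        refine arcRL m hm (fun p => (F p).val) (u i.val) (u (i.val+1)) hse hstep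
          (hint i.val hi) ?_ ?_ ?_
        · show 3*m-1 ≤ (F (u i.val)).val
          omega
        · show (F (u (i.val+1))).val + 1 ≤ m
          omega
        · show (F (u (i.val+1))).val + (3*m-3) < (F (u i.val)).val
          omega
      · have hi2 : i.val + 1 = 2*m := by omega
        have h2 : (F (u (i.val+1))).val = 0 := by
          rw [hi2, hFu2, hvval]
          show vv ((0 : Fin (2*m)) : ℕ) = 0
          rw [Fin.val_zero]
          simp only [hvvdef]
          norm_num
        refine arcRL m hm (fun p => (F p).val) (u i.val) (u (i.val+1)) hse hstep
          (hint i.val hi) ?_ ?_ ?_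
        · show 3*m-1 ≤ (F (u i.val)).val
          omega
        · show (F (u (i.val+1))).val + 1 ≤ m
          omega
        · show (F (u (i.val+1))).val + (3*m-3) < (F (u i.val)).val
          omega
  choose p hp1 hp2 hpm1 hpm2 using key
  have hpwin : ∀ i : Fin (2*m), τ 0 < p i ∧ p i < τ 0 + len := by
    intro i
    exact ⟨lt_of_le_of_lt (huwin i.val (by have := i.isLt; omega)).1 (hp1 i),
      lt_of_lt_of_le (hp2 i) (huwin (i.val+1) (by have := i.isLt; omega)).2⟩
  have hginj : Function.Injective (fun i : Fin (2*m) => (F (p i)).val) := by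
    intro i j hij
    by_contra hne
    have hFij : F (p i) = F (p j) := Fin.ext hij
    have hmodij := hFcong _ _ hFij
    have hwi := hpwin i
    have hwj := hpwin j
    have hpij : p i = p j := by
      rcases le_total (p i) (p j) with hle | hle
      · exact hwinmod _ _ hle (by omega) hmodij
      · exact (hwinmod _ _ hle (by omega) hmodij.symm).symm
    have hne' : i.val ≠ j.val := fun h => hne (Fin.ext h)
    rcases Nat.lt_or_ge i.val j.val with hc | hc
    · have h1 : u (i.val+1) ≤ u j.val := humono' (i.val+1) j.val (by omega)
        (by have := j.isLt; omega)
      have := hp2 i; have := hp1 j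
      omega
    · have h1 : u (j.val+1) ≤ u i.val := humono' (j.val+1) i.val (by omega)
        (by have := i.isLt; omega)
      have := hp2 j; have := hp1 i
      omega
  have hcard : (Finset.univ : Finset (Fin (2*m))).card ≤ (Finset.Icc m (3*m-2)).card := by
    apply Finset.card_le_card_of_injOn (fun i => (F (p i)).val)
    · intro i _
      exact Finset.mem_Icc.mpr ⟨hpm1 i, hpm2 i⟩
    · exact hginj.injOn
  rw [Finset.card_univ, Fintype.card_fin, Nat.card_Icc] at hcard
  omega
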